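/- (Theorem 2, deterministic core: the unidirectional TMMSE combining satisfies the stationarity identity (40)) Let Λ_1,…,Λ_L and Π_1,…,Π_L be K×K complex matrices such that I_K − Π_l Λ_l is invertible for every l. Define S_l := (I_K − Π_l Λ_l)^{−1}(I_K − Π_l) and S̄_l := I_K − Λ_l S_l. Then for every l ∈ {1,…,L}: (S_l + Π_l S̄_l) ∏_{s=1}^{l−1} S̄_s + Σ_{j=1}^{l−1} Λ_j S_j ∏_{s=1}^{j−1} S̄_s = I_K. -/

import Mathlib

/-!
(Theorem 2, deterministic core: the unidirectional TMMSE combining satisfies the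
stationarity identity (40)) Let Λ_1,…,Λ_L and Π_1,…,Π_L be K×K complex matrices such that
I_K − Π_l Λ_l is invertible for every l. Define S_l := (I_K − Π_l Λ_l)⁻¹ (I_K − Π_l) and
S̄_l := I_K − Λ_l S_l. Then for every l ∈ {1,…,L}:
(S_l + Π_l S̄_l) ∏_{s=1}^{l−1} S̄_s + Σ_{j=1}^{l−1} Λ_j S_j ∏_{s=1}^{j−1} S̄_s = I_K,
where ∏_{s=a}^{b} X_s denotes the ordered product X_b X_{b−1} ⋯ X_a (equal to I_K if b < a).
-/

/-- Ordered matrix product `∏_{s=a}^{b} X_s = X b * X (b-1) * ⋯ * X a`,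
equal to the identity when `b < a`. -/
noncomputable def ordProd {K : ℕ} (X : ℕ → Matrix (Fin K) (Fin K) ℂ) (a : ℕ) :
    ℕ → Matrix (Fin K) (Fin K) ℂ
  | 0 => if a = 0 then X 0 else 1
  | b + 1 => if b + 1 < a then 1 else X (b + 1) * ordProd X a b

/-!
From `(1 - Π_l Λ_l) S_l = 1 - Π_l` one gets `S_l + Π_l S̄_l = 1`, so the first term is just
`∏_{s=1}^{l-1} S̄_s`. Since `Λ_j S_j = 1 - S̄_j`, the `j`-th summand is
`∏_{s=1}^{j-1} S̄_s - ∏_{s=1}^{j} S̄_s`, and the sum telescopes to `1 - ∏_{s=1}^{l-1} S̄_s`.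
-/

theorem ordProd_one_zero {K : ℕ} (X : ℕ → Matrix (Fin K) (Fin K) ℂ) : ordProd X 1 0 = 1 := rfl

theorem ordProd_succ {K : ℕ} (X : ℕ → Matrix (Fin K) (Fin K) ℂ) {a b : ℕ} (h : a ≤ b + 1) :
    ordProd X a (b + 1) = X (b + 1) * ordProd X a b := by
  simp [ordProd, not_lt.mpr h]

theorem sum_Icc_one_sub_mul_eq_sub {R : Type*} [Ring R] (X P : ℕ → R)
    (hP : ∀ n, P (n + 1) = X (n + 1) * P n) (m : ℕ) :
    ∑ j ∈ Finset.Icc 1 m, (1 - X j) * P (j - 1) = P 0 - P m := by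
  induction m with
  | zero => simp
  | succ n ih =>
    rw [Finset.sum_Icc_succ_top (by omega), ih, Nat.add_sub_cancel, hP]
    noncomm_ring

theorem add_mul_one_sub_mul_eq_one {R : Type*} [Ring R] {p l s : R}
    (h : (1 - p * l) * s = 1 - p) : s + p * (1 - l * s) = 1 := by
  calc s + p * (1 - l * s) = (1 - p * l) * s + p := by noncomm_ring
    _ = 1 := by rw [h]; abel

theorem stmt_6_general (K L : ℕ)
    (Λ Pmat : ℕ → Matrix (Fin K) (Fin K) ℂ)
    (hinv : ∀ l ∈ Finset.Icc 1 L, IsUnit (1 - Pmat l * Λ l))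
    (S Sbar : ℕ → Matrix (Fin K) (Fin K) ℂ)
    (hS : ∀ l ∈ Finset.Icc 1 L, S l = (1 - Pmat l * Λ l)⁻¹ * (1 - Pmat l))
    (hSbar : ∀ l ∈ Finset.Icc 1 L, Sbar l = 1 - Λ l * S l) :
    ∀ l ∈ Finset.Icc 1 L,
      (S l + Pmat l * Sbar l) * ordProd Sbar 1 (l - 1)
        + ∑ j ∈ Finset.Icc 1 (l - 1), Λ j * S j * ordProd Sbar 1 (j - 1) = 1 := by
  intro l hl
  have hfirst : S l + Pmat l * Sbar l = 1 := by
    rw [hSbar l hl]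
    refine add_mul_one_sub_mul_eq_one ?_
    rw [hS l hl, Matrix.mul_nonsing_inv_cancel_left _ _
      ((Matrix.isUnit_iff_isUnit_det _).mp (hinv l hl))]
  have hsummand : ∀ j ∈ Finset.Icc 1 (l - 1), Λ j * S j = 1 - Sbar j := by
    intro j hj
    have hjL : j ∈ Finset.Icc 1 L := by
      simp only [Finset.mem_Icc] at hj hl ⊢
      omega
    rw [hSbar j hjL, sub_sub_cancel]
  rw [hfirst, Matrix.one_mul, Finset.sum_congr rfl fun j hj => by rw [hsummand j hj],
    sum_Icc_one_sub_mul_eq_sub Sbar (ordProd Sbar 1) (fun n => ordProd_succ Sbar (by omega)),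
    ordProd_one_zero]
  abel

theorem stmt_6 (K L : ℕ) (hK : 0 < K)
    (Λ Pmat : ℕ → Matrix (Fin K) (Fin K) ℂ)
    (hinv : ∀ l ∈ Finset.Icc 1 L, IsUnit (1 - Pmat l * Λ l))
    (S Sbar : ℕ → Matrix (Fin K) (Fin K) ℂ)
    (hS : ∀ l ∈ Finset.Icc 1 L, S l = (1 - Pmat l * Λ l)⁻¹ * (1 - Pmat l))
    (hSbar : ∀ l ∈ Finset.Icc 1 L, Sbar l = 1 - Λ l * S l) :
    ∀ l ∈ Finset.Icc 1 L,
      (S l + Pmat l * Sbar l) * ordProd Sbar 1 (l - 1)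
        + ∑ j ∈ Finset.Icc 1 (l - 1), Λ j * S j * ordProd Sbar 1 (j - 1) = 1 :=
  stmt_6_general K L Λ Pmat hinv S Sbar hS hSbar
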